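/- arXiv:2406.13902 — 4 statements merged into one kernel-verified Lean document; each statement's English description precedes it below -/
import Mathlib

section
/- The power sum symmetric polynomial expands in the monomial basis as p_λ = Σ_μ P(λ,μ) m_μ, where P(λ,μ) is the number of matrices with entries in ℕ having column sums λ and row sums μ, in which each column contains at most one nonzero entry. -/
/-! Expanding the product, a term of `∏ⱼ ∑ᵢ xᵢ^{λⱼ}` is a choice of a row `f j` for every
column `j`, and it contributes the monomial with exponent `∑ⱼ λⱼ e_{f j}`. Since every `λⱼ` is
positive, such choices `f` are in bijection with the matrices whose column `j` has the single
nonzero entry `λⱼ`, in row `f j`; the row sums of that matrix are the exponents of the monomial. -/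

open MvPolynomial Finset

section
variable {σ ι : Type*}

theorem prod_X_apply_pow_eq_monomial {R : Type*} [CommSemiring R] [Fintype ι]
    (a : ι → ℕ) (f : ι → σ) :
    ∏ j, (X (f j) : MvPolynomial σ R) ^ a j = monomial (∑ j, Finsupp.single (f j) (a j)) 1 := by
  rw [monomial_sum_one]
  exact prod_congr rfl fun j _ => X_pow_eq_monomial

theorem coeff_prod_sum_X_pow {R : Type*} [CommSemiring R] [Fintype σ] [Fintype ι]
    [DecidableEq σ] [DecidableEq ι] (a : ι → ℕ) (d : σ →₀ ℕ) :
    coeff d (∏ j, ∑ i, (X i : MvPolynomial σ R) ^ a j)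
      = #{f : ι → σ | ∑ j, Finsupp.single (f j) (a j) = d} := by
  rw [Fintype.prod_sum, coeff_sum, card_filter, Nat.cast_sum]
  refine sum_congr rfl fun f _ => ?_
  rw [prod_X_apply_pow_eq_monomial, coeff_monomial]
  split_ifs <;> simp

variable [DecidableEq σ]

def columnMatrix (a : ι → ℕ) (f : ι → σ) : σ → ι → ℕ :=
  fun i j => if f j = i then a j else 0

theorem sum_columnMatrix_row [Fintype ι] (a : ι → ℕ) (f : ι → σ) (i : σ) :
    ∑ j, columnMatrix a f i j = (∑ j, Finsupp.single (f j) (a j)) i := by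
  simp only [columnMatrix, Finsupp.finsetSum_apply, Finsupp.single_apply]

theorem sum_columnMatrix_column [Fintype σ] (a : ι → ℕ) (f : ι → σ) (j : ι) :
    ∑ i, columnMatrix a f i j = a j := by
  simp [columnMatrix]

theorem eq_of_columnMatrix_ne_zero {a : ι → ℕ} {f : ι → σ} {i : σ} {j : ι}
    (h : columnMatrix a f i j ≠ 0) : f j = i := by
  by_contra hne
  simp [columnMatrix, hne] at h

theorem columnMatrix_injective {a : ι → ℕ} (ha : ∀ j, a j ≠ 0) :
    Function.Injective (columnMatrix (σ := σ) a) := by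
  intro f g hfg
  funext j
  refine eq_of_columnMatrix_ne_zero (a := a) ?_
  rw [hfg]
  simpa [columnMatrix] using ha j

theorem exists_columnMatrix_eq [Fintype σ] {a : ι → ℕ} (ha : ∀ j, a j ≠ 0) {A : σ → ι → ℕ}
    (hcol : ∀ j, ∑ i, A i j = a j)
    (hsparse : ∀ j, ∀ i₁ i₂, A i₁ j ≠ 0 → A i₂ j ≠ 0 → i₁ = i₂) :
    ∃ f, columnMatrix a f = A := by
  have hsupp : ∀ j, ∃ i, A i j ≠ 0 := fun j => by
    by_contra! h
    exact ha j (by simp [← hcol j, h])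
  choose f hf using hsupp
  refine ⟨f, funext fun i => funext fun j => ?_⟩
  have hzero : ∀ k, k ≠ f j → A k j = 0 := fun k hk => by
    by_contra h
    exact hk (hsparse j k (f j) h (hf j))
  by_cases hi : f j = i
  · subst hi
    rw [columnMatrix, if_pos rfl, ← hcol j]
    exact sum_eq_single (f j) (fun k _ hk => hzero k hk) (absurd (mem_univ _))
  · simp only [columnMatrix, if_neg hi]
    exact (hzero i (Ne.symm hi)).symm

theorem natCard_matrices_eq_card_functions [Fintype σ] [Fintype ι] [DecidableEq ι]
    {a : ι → ℕ} (ha : ∀ j, a j ≠ 0) (d : σ →₀ ℕ) :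
    Nat.card {A : σ → ι → ℕ // (∀ j, ∑ i, A i j = a j) ∧ (∀ i, ∑ j, A i j = d i) ∧
        (∀ j, ∀ i₁ i₂, A i₁ j ≠ 0 → A i₂ j ≠ 0 → i₁ = i₂)}
      = #{f : ι → σ | ∑ j, Finsupp.single (f j) (a j) = d} := by
  let toMatrix : {f : ι → σ // ∑ j, Finsupp.single (f j) (a j) = d} →
      {A : σ → ι → ℕ // (∀ j, ∑ i, A i j = a j) ∧ (∀ i, ∑ j, A i j = d i) ∧
        (∀ j, ∀ i₁ i₂, A i₁ j ≠ 0 → A i₂ j ≠ 0 → i₁ = i₂)} :=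
    fun f => ⟨columnMatrix a f.1, sum_columnMatrix_column a f.1,
      fun i => by rw [sum_columnMatrix_row, f.2],
      fun _ _ _ h₁ h₂ =>
        (eq_of_columnMatrix_ne_zero h₁).symm.trans (eq_of_columnMatrix_ne_zero h₂)⟩
  have hbij : Function.Bijective toMatrix := by
    refine ⟨fun f g hfg => Subtype.ext (columnMatrix_injective ha (congrArg Subtype.val hfg)), ?_⟩
    rintro ⟨A, hcol, hrow, hsparse⟩
    obtain ⟨f, rfl⟩ := exists_columnMatrix_eq ha hcol hsparse
    refine ⟨⟨f, Finsupp.ext fun i => ?_⟩, rfl⟩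
    rw [← sum_columnMatrix_row, hrow]
  rw [← Nat.card_congr (Equiv.ofBijective toMatrix hbij), Nat.card_eq_fintype_card,
    Fintype.card_subtype]

end

theorem powerSum_monomial_expansion_general (n l : ℕ) (lam : Fin l → ℕ)
    (hpos : ∀ j, 0 < lam j)
    (d : Fin n →₀ ℕ) :
    MvPolynomial.coeff d
        (∏ j : Fin l, ∑ i : Fin n, (MvPolynomial.X i : MvPolynomial (Fin n) ℤ) ^ lam j)
      = (Nat.card {A : Fin n → Fin l → ℕ //
          (∀ j, ∑ i, A i j = lam j) ∧ (∀ i, ∑ j, A i j = d i) ∧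
          (∀ j, ∀ i1 i2 : Fin n, A i1 j ≠ 0 → A i2 j ≠ 0 → i1 = i2)} : ℤ) := by
  rw [coeff_prod_sum_X_pow, natCard_matrices_eq_card_functions fun j => (hpos j).ne']

/-- Expansion of the power sum symmetric polynomial `p_λ` in the monomial basis:
the coefficient of the monomial `x^d` in `p_λ = p_{λ_1} ⋯ p_{λ_ℓ}` equals the number of
`ℕ`-matrices with column sums `λ` and row sums `d` in which every column has at most one
nonzero entry (equivalently, `p_λ = Σ_μ P(λ,μ) m_μ`). -/
theorem powerSum_monomial_expansion (n l : ℕ) (lam : Fin l → ℕ)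
    (hA : Antitone lam) (hpos : ∀ j, 0 < lam j) (hn : ∑ j, lam j ≤ n)
    (d : Fin n →₀ ℕ) :
    MvPolynomial.coeff d
        (∏ j : Fin l, ∑ i : Fin n, (MvPolynomial.X i : MvPolynomial (Fin n) ℤ) ^ lam j)
      = (Nat.card {A : Fin n → Fin l → ℕ //
          (∀ j, ∑ i, A i j = lam j) ∧ (∀ i, ∑ j, A i j = d i) ∧
          (∀ j, ∀ i1 i2 : Fin n, A i1 j ≠ 0 → A i2 j ≠ 0 → i1 = i2)} : ℤ) :=
  powerSum_monomial_expansion_general n l lam hpos d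
end

section
/- The elementary symmetric polynomial expands in the monomial basis as e_λ = Σ_μ E(λ,μ) m_μ, where E(λ,μ) is the number of {0,1}-matrices with column sums λ and row sums μ. -/
/-!
Expanding `e_λ = ∏ⱼ e_{λⱼ}` as a product of sums over `λⱼ`-subsets gives one monomial for each
family `S` of subsets `Sⱼ` with `#Sⱼ = λⱼ`, namely `∏ᵢ xᵢ ^ #{j | i ∈ Sⱼ}`. Such a family is the
same thing as a `{0,1}`-matrix whose `j`-th column is the indicator of `Sⱼ`: its column sums are
`λ` and its row sums are the exponents of the monomial.
-/

open MvPolynomial Finset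

section SubsetFamilies

variable {σ ι : Type*} [Fintype σ] [DecidableEq σ] [Fintype ι] [DecidableEq ι]

def subsetFamilies (c : ι → ℕ) (r : σ → ℕ) : Finset (ι → Finset σ) :=
  {S ∈ Fintype.piFinset fun j => powersetCard (c j) univ | ∀ i, #{j | i ∈ S j} = r i}

theorem mem_subsetFamilies {c : ι → ℕ} {r : σ → ℕ} {S : ι → Finset σ} :
    S ∈ subsetFamilies c r ↔ (∀ j, #(S j) = c j) ∧ ∀ i, #{j | i ∈ S j} = r i := by
  simp [subsetFamilies]

end SubsetFamilies

section IncidenceMatrix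

variable {σ ι : Type*} [DecidableEq σ]

def incidenceMatrix (S : ι → Finset σ) : σ → ι → ℕ := fun i j => if i ∈ S j then 1 else 0

theorem incidenceMatrix_eq_one_iff {S : ι → Finset σ} {i : σ} {j : ι} :
    incidenceMatrix S i j = 1 ↔ i ∈ S j := by
  simp [incidenceMatrix]

theorem incidenceMatrix_injective : Function.Injective (incidenceMatrix (σ := σ) (ι := ι)) := by
  intro S T h
  ext j i
  rw [← incidenceMatrix_eq_one_iff, h, incidenceMatrix_eq_one_iff]

theorem range_incidenceMatrix [Fintype σ] :
    Set.range (incidenceMatrix (σ := σ) (ι := ι)) = {A | ∀ i j, A i j ≤ 1} := by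
  ext A
  refine ⟨?_, fun hA => ⟨fun j => {i | A i j = 1}, ?_⟩⟩
  · rintro ⟨S, rfl⟩ i j
    unfold incidenceMatrix
    split <;> simp
  · funext i j
    rcases Nat.le_one_iff_eq_zero_or_eq_one.mp (hA i j) with h | h <;> simp [incidenceMatrix, h]

theorem sum_incidenceMatrix_column [Fintype σ] (S : ι → Finset σ) (j : ι) :
    ∑ i, incidenceMatrix S i j = #(S j) := by
  simp [incidenceMatrix]

theorem sum_incidenceMatrix_row [Fintype ι] (S : ι → Finset σ) (i : σ) :
    ∑ j, incidenceMatrix S i j = #{j | i ∈ S j} := by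
  simp [incidenceMatrix]

theorem card_zeroOneMatrix_eq [Fintype σ] [Fintype ι] [DecidableEq ι] (c : ι → ℕ) (r : σ → ℕ) :
    Nat.card {A : σ → ι → ℕ //
        (∀ i j, A i j ≤ 1) ∧ (∀ j, ∑ i, A i j = c j) ∧ ∀ i, ∑ j, A i j = r i} =
      #(subsetFamilies c r) := by
  have hset : {A : σ → ι → ℕ |
        (∀ i j, A i j ≤ 1) ∧ (∀ j, ∑ i, A i j = c j) ∧ ∀ i, ∑ j, A i j = r i} =
      incidenceMatrix '' subsetFamilies c r := by
    ext A
    constructor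
    · rintro ⟨hA, hc, hr⟩
      obtain ⟨S, rfl⟩ := (range_incidenceMatrix (σ := σ) (ι := ι)).ge hA
      refine ⟨S, mem_subsetFamilies.mpr ?_, rfl⟩
      simp_all [sum_incidenceMatrix_column, sum_incidenceMatrix_row]
    · rintro ⟨S, hS, rfl⟩
      rw [mem_coe, mem_subsetFamilies] at hS
      refine ⟨range_incidenceMatrix.le (Set.mem_range_self S), ?_, ?_⟩ <;>
        simp [sum_incidenceMatrix_column, sum_incidenceMatrix_row, hS]
  rw [← Set.coe_ofPred, hset, Nat.card_image_of_injective incidenceMatrix_injective,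
    Nat.card_coe_set_eq, Set.ncard_coe_finset]

end IncidenceMatrix

namespace MvPolynomial

variable {σ ι R : Type*} [Fintype ι] [CommSemiring R]

theorem prod_esymm_eq_sum_monomial [Fintype σ] [DecidableEq ι] (k : ι → ℕ) :
    ∏ j, esymm σ R (k j) =
      ∑ S ∈ Fintype.piFinset fun j => powersetCard (k j) (univ : Finset σ),
        monomial (∑ j, ∑ i ∈ S j, Finsupp.single i 1) 1 := by
  simp_rw [esymm_eq_sum_monomial, prod_univ_sum, monomial_sum_one]

theorem sum_sum_single_one_apply [DecidableEq σ] (S : ι → Finset σ) (i : σ) :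
    (∑ j, ∑ i' ∈ S j, Finsupp.single i' 1) i = #{j | i ∈ S j} := by
  simp [Finsupp.finsetSum_apply, Finsupp.single_apply]

theorem coeff_prod_esymm [Fintype σ] [DecidableEq σ] [DecidableEq ι] (k : ι → ℕ) (d : σ →₀ ℕ) :
    coeff d (∏ j, esymm σ R (k j)) = #(subsetFamilies k d) := by
  simp_rw [subsetFamilies, prod_esymm_eq_sum_monomial, coeff_sum, coeff_monomial, sum_boole,
    Finsupp.ext_iff, sum_sum_single_one_apply]

end MvPolynomial

theorem esymm_monomial_expansion_general (n l : ℕ) (lam : Fin l → ℕ)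
    (d : Fin n →₀ ℕ) :
    MvPolynomial.coeff d
        (∏ j : Fin l, (MvPolynomial.esymm (Fin n) ℤ (lam j)))
      = (Nat.card {A : Fin n → Fin l → ℕ //
          (∀ i j, A i j ≤ 1) ∧
          (∀ j, ∑ i, A i j = lam j) ∧ (∀ i, ∑ j, A i j = d i)} : ℤ) := by
  rw [coeff_prod_esymm, card_zeroOneMatrix_eq]

/-- Expansion of the elementary symmetric polynomial `e_λ` in the monomial basis:
the coefficient of the monomial `x^d` in `e_λ = e_{λ_1} ⋯ e_{λ_ℓ}` equals the number of
`{0,1}`-matrices with column sums `λ` and row sums `d`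
(equivalently, `e_λ = Σ_μ E(λ,μ) m_μ`). -/
theorem esymm_monomial_expansion (n l : ℕ) (lam : Fin l → ℕ)
    (hA : Antitone lam) (hpos : ∀ j, 0 < lam j) (hn : ∑ j, lam j ≤ n)
    (d : Fin n →₀ ℕ) :
    MvPolynomial.coeff d
        (∏ j : Fin l, (MvPolynomial.esymm (Fin n) ℤ (lam j)))
      = (Nat.card {A : Fin n → Fin l → ℕ //
          (∀ i j, A i j ≤ 1) ∧
          (∀ j, ∑ i, A i j = lam j) ∧ (∀ i, ∑ j, A i j = d i)} : ℤ) :=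
  esymm_monomial_expansion_general n l lam d
end

section
/- In the expansion of the dual immaculate polynomial, 𝔖*_α = Σ_β K^I_{α,β} M_β, the immaculate Kostka number satisfies K^I_{α,α} = 1, and K^I_{α,β} = 0 unless α ⊴ β in dominance order on strong compositions of the same size. -/
/-!
With rows indexed from `0`, every entry in row `i` of an immaculate tableau is at least `i + 1`:
the first column strictly increases from a positive entry and rows weakly increase. So the
`β_0 + ⋯ + β_{m-1}` entries that are at most `m` all sit in the first `m` rows, which have
`α_0 + ⋯ + α_{m-1}` boxes; this is dominance. For content `α` the count is tight for every `m`,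
so each box of row `i` holds exactly `i + 1`, which pins down the unique such tableau.
-/

/-- A filling `T` of the diagram of the strong composition `α` (row `i` has `α_i` boxes,
`0`-indexed columns) which is an "immaculate tableau": entries are positive inside the
diagram and zero outside, entries weakly increase along rows, and entries strictly
increase down the leftmost column. -/
def IsImmaculateFilling (α : List ℕ) (T : ℕ → ℕ → ℕ) : Prop :=
  (∀ i j : ℕ, (α.length ≤ i ∨ α.getD i 0 ≤ j) → T i j = 0) ∧
  (∀ i j : ℕ, i < α.length → j < α.getD i 0 → 0 < T i j) ∧
  (∀ i j : ℕ, i < α.length → j + 1 < α.getD i 0 → T i j ≤ T i (j + 1)) ∧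
  (∀ i : ℕ, i + 1 < α.length → T i 0 < T (i + 1) 0)

/-- `T` has content `β`: the entry `v + 1` appears exactly `β_v` times, and all entries
are at most `length β`. -/
def HasContent (α β : List ℕ) (T : ℕ → ℕ → ℕ) : Prop :=
  (∀ i j : ℕ, T i j ≤ β.length) ∧
  (∀ v : ℕ, v < β.length →
    (∑ i ∈ Finset.range α.length,
      ((Finset.range (α.getD i 0)).filter (fun j => T i j = v + 1)).card) = β.getD v 0)

/-- The immaculate Kostka number `K^I_{α,β}`. -/
noncomputable def immaculateKostka (α β : List ℕ) : ℕ :=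
  Nat.card {T : ℕ → ℕ → ℕ // IsImmaculateFilling α T ∧ HasContent α β T}

open Finset

theorem List.sum_take_eq_sum_range_getD {M : Type*} [AddCommMonoid M] (l : List M) (m : ℕ) :
    (l.take m).sum = ∑ i ∈ Finset.range m, l.getD i 0 := by
  induction l generalizing m with
  | nil => simp
  | cons a t ih =>
    cases m with
    | zero => simp
    | succ m =>
      rw [List.take_succ_cons, List.sum_cons, ih, Finset.sum_range_succ', List.getD_cons_zero,
        add_comm]
      simp only [List.getD_cons_succ]

theorem List.getD_pos {l : List ℕ} (hl : ∀ x ∈ l, 0 < x) {i : ℕ} (hi : i < l.length) :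
    0 < l.getD i 0 := by
  rw [List.getD_eq_getElem _ _ hi]
  exact hl _ (List.getElem_mem hi)

theorem Finset.sum_range_eq_sum_range_of_eq_zero {M : Type*} [AddCommMonoid M] {f : ℕ → M}
    {a b : ℕ} (ha : ∀ i, a ≤ i → f i = 0) (hb : ∀ i, b ≤ i → f i = 0) :
    ∑ i ∈ range a, f i = ∑ i ∈ range b, f i := by
  have h : ∀ {c d : ℕ}, (∀ i, d ≤ i → f i = 0) →
      ∑ i ∈ range (min c d), f i = ∑ i ∈ range c, f i := fun hd =>
    sum_subset (range_subset_range.2 (min_le_left _ _)) fun i hc hcd => by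
      simp only [mem_range] at hc hcd
      exact hd i (by omega)
  rw [← h hb, ← h (c := b) ha, min_comm]

theorem HasContent.card_filter_eq {α β : List ℕ} {T : ℕ → ℕ → ℕ} (hC : HasContent α β T)
    (v : ℕ) :
    ∑ i ∈ range α.length, ((range (α.getD i 0)).filter (fun j => T i j = v + 1)).card =
      β.getD v 0 := by
  by_cases hv : v < β.length
  · exact hC.2 v hv
  rw [List.getD_eq_default _ _ (by omega)]
  refine sum_eq_zero fun i _ => card_filter_eq_zero_iff.2 fun j _ => ?_
  have := hC.1 i j
  omega

def rowCountLE (α : List ℕ) (T : ℕ → ℕ → ℕ) (i m : ℕ) : ℕ :=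
  ((range (α.getD i 0)).filter (fun j => T i j ≤ m)).card

theorem rowCountLE_le (α : List ℕ) (T : ℕ → ℕ → ℕ) (i m : ℕ) :
    rowCountLE α T i m ≤ α.getD i 0 :=
  (card_filter_le _ _).trans (card_range _).le

theorem rowCountLE_eq_iff {α : List ℕ} {T : ℕ → ℕ → ℕ} {i m : ℕ} :
    rowCountLE α T i m = α.getD i 0 ↔ ∀ j < α.getD i 0, T i j ≤ m := by
  have h := card_filter_eq_iff (s := range (α.getD i 0)) (p := fun j => T i j ≤ m)
  simp only [card_range, mem_range] at h
  exact h

namespace IsImmaculateFilling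

variable {α β : List ℕ} {T : ℕ → ℕ → ℕ}

theorem sum_rowCountLE (hT : IsImmaculateFilling α T) (hC : HasContent α β T) (m : ℕ) :
    ∑ i ∈ range α.length, rowCountLE α T i m = ∑ v ∈ range m, β.getD v 0 := by
  have hrow : ∀ i ∈ range α.length, rowCountLE α T i m =
      ∑ v ∈ range m, ((range (α.getD i 0)).filter (fun j => T i j = v + 1)).card := by
    intro i hi
    rw [mem_range] at hi
    have hunion : (range (α.getD i 0)).filter (fun j => T i j ≤ m) =
        (range m).biUnion (fun v => (range (α.getD i 0)).filter (fun j => T i j = v + 1)) := by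
      ext j
      simp only [mem_filter, mem_biUnion, mem_range]
      constructor
      · rintro ⟨hj, hle⟩
        have := hT.2.1 i j hi hj
        exact ⟨T i j - 1, by omega, hj, by omega⟩
      · rintro ⟨v, hv, hj, he⟩
        exact ⟨hj, by omega⟩
    rw [rowCountLE, hunion, card_biUnion]
    intro v _ w _ hvw
    simp only [disjoint_left, mem_filter]
    rintro j ⟨_, hv⟩ ⟨_, hw⟩
    omega
  rw [sum_congr rfl hrow, sum_comm]
  exact sum_congr rfl fun v _ => hC.card_filter_eq v

theorem add_one_le (hα : ∀ x ∈ α, 0 < x) (hT : IsImmaculateFilling α T) {i j : ℕ}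
    (hi : i < α.length) (hj : j < α.getD i 0) : i + 1 ≤ T i j := by
  obtain ⟨-, hpos, hrow, hcol⟩ := hT
  have hfirst : ∀ i < α.length, i + 1 ≤ T i 0 := by
    intro i hi
    induction i with
    | zero => exact hpos 0 0 hi (List.getD_pos hα hi)
    | succ n ih => exact (ih (by omega)).trans_lt (hcol n hi)
  induction j with
  | zero => exact hfirst i hi
  | succ n ih => exact (ih (by omega)).trans (hrow i n hi hj)

theorem rowCountLE_eq_zero (hα : ∀ x ∈ α, 0 < x) (hT : IsImmaculateFilling α T) {i m : ℕ}
    (hmi : m ≤ i) : rowCountLE α T i m = 0 := by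
  refine card_filter_eq_zero_iff.2 fun j hj => ?_
  rw [mem_range] at hj
  have hi : i < α.length := by
    by_contra!
    rw [List.getD_eq_default _ _ this] at hj
    omega
  have := hT.add_one_le hα hi hj
  omega

/-- Boxes with entry at most `m` lie in the first `m` rows, by `add_one_le`. -/
theorem sum_range_rowCountLE (hα : ∀ x ∈ α, 0 < x) (hT : IsImmaculateFilling α T)
    (hC : HasContent α β T) (m : ℕ) :
    ∑ i ∈ range m, rowCountLE α T i m = ∑ v ∈ range m, β.getD v 0 := by
  rw [← hT.sum_rowCountLE hC m]
  refine sum_range_eq_sum_range_of_eq_zero (fun i hi => hT.rowCountLE_eq_zero hα hi)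
    fun i hi => Nat.le_zero.1 ((rowCountLE_le α T i m).trans_eq (List.getD_eq_default _ _ hi))

theorem sum_take_le (hα : ∀ x ∈ α, 0 < x) (hT : IsImmaculateFilling α T)
    (hC : HasContent α β T) (m : ℕ) : (β.take m).sum ≤ (α.take m).sum := by
  rw [List.sum_take_eq_sum_range_getD, List.sum_take_eq_sum_range_getD,
    ← hT.sum_range_rowCountLE hα hC]
  exact sum_le_sum fun i _ => rowCountLE_le α T i m

/-- Rows `0, …, i` hold `α_0 + ⋯ + α_i` entries at most `i + 1`, i.e. all of their boxes. -/
theorem eq_add_one_of_hasContent_self (hα : ∀ x ∈ α, 0 < x) (hT : IsImmaculateFilling α T)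
    (hC : HasContent α α T) {i j : ℕ} (hi : i < α.length) (hj : j < α.getD i 0) :
    T i j = i + 1 := by
  have hrow : rowCountLE α T i (i + 1) = α.getD i 0 :=
    (sum_eq_sum_iff_of_le fun i' _ => rowCountLE_le α T i' (i + 1)).1
      (hT.sum_range_rowCountLE hα hC (i + 1)) i (self_mem_range_succ i)
  have := rowCountLE_eq_iff.1 hrow j hj
  have := hT.add_one_le hα hi hj
  omega

end IsImmaculateFilling

def rowFilling (α : List ℕ) (i j : ℕ) : ℕ :=
  if i < α.length ∧ j < α.getD i 0 then i + 1 else 0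

theorem rowFilling_of_lt {α : List ℕ} {i j : ℕ} (hi : i < α.length) (hj : j < α.getD i 0) :
    rowFilling α i j = i + 1 :=
  if_pos ⟨hi, hj⟩

theorem isImmaculateFilling_rowFilling {α : List ℕ} (hα : ∀ x ∈ α, 0 < x) :
    IsImmaculateFilling α (rowFilling α) := by
  refine ⟨fun i j h => if_neg (by omega), fun i j hi hj => ?_, fun i j hi hj => ?_,
    fun i hi => ?_⟩
  · rw [rowFilling_of_lt hi hj]
    omega
  · rw [rowFilling_of_lt hi (by omega), rowFilling_of_lt hi hj]
  · rw [rowFilling_of_lt (by omega) (List.getD_pos hα (by omega)),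
      rowFilling_of_lt hi (List.getD_pos hα hi)]
    omega

theorem hasContent_rowFilling (α : List ℕ) : HasContent α α (rowFilling α) := by
  refine ⟨fun i j => ?_, fun v hv => ?_⟩
  · unfold rowFilling
    split <;> omega
  rw [sum_eq_single v]
  · rw [filter_true_of_mem fun j hj => rowFilling_of_lt hv (mem_range.1 hj), card_range]
  · refine fun i hi hiv => card_filter_eq_zero_iff.2 fun j hj => ?_
    rw [rowFilling_of_lt (mem_range.1 hi) (mem_range.1 hj)]
    omega
  · exact fun h => absurd (mem_range.2 hv) h

theorem IsImmaculateFilling.eq_rowFilling_of_hasContent_self {α : List ℕ} {T : ℕ → ℕ → ℕ}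
    (hα : ∀ x ∈ α, 0 < x) (hT : IsImmaculateFilling α T) (hC : HasContent α α T) :
    T = rowFilling α := by
  funext i j
  unfold rowFilling
  split_ifs with h
  · exact hT.eq_add_one_of_hasContent_self hα hC h.1 h.2
  · exact hT.1 i j (by omega)

theorem immaculateKostka_unitriangular_general (α β : List ℕ)
    (hαpos : ∀ x ∈ α, 0 < x) :
    immaculateKostka α α = 1 ∧
    (¬ (∀ i : ℕ, (β.take i).sum ≤ (α.take i).sum) → immaculateKostka α β = 0) := by
  refine ⟨?_, fun hdom => ?_⟩
  · rw [immaculateKostka, Nat.card_eq_one_iff_exists]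
    exact ⟨⟨rowFilling α, isImmaculateFilling_rowFilling hαpos, hasContent_rowFilling α⟩,
      fun ⟨T, hT, hC⟩ => Subtype.ext (hT.eq_rowFilling_of_hasContent_self hαpos hC)⟩
  · rw [immaculateKostka, Nat.card_eq_zero]
    exact Or.inl ⟨fun ⟨T, hT, hC⟩ => hdom (hT.sum_take_le hαpos hC)⟩

/-- In the expansion `𝔖*_α = Σ_β K^I_{α,β} M_β`, the immaculate Kostka numbers satisfy
`K^I_{α,α} = 1` and `K^I_{α,β} = 0` unless `α ⊴ β` in dominance order on strong
compositions of the same size (partial sums of `α` at least those of `β`). -/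
theorem immaculateKostka_unitriangular (k : ℕ) (α β : List ℕ)
    (hαpos : ∀ x ∈ α, 0 < x) (hβpos : ∀ x ∈ β, 0 < x)
    (hαsum : α.sum = k) (hβsum : β.sum = k) :
    immaculateKostka α α = 1 ∧
    (¬ (∀ i : ℕ, (β.take i).sum ≤ (α.take i).sum) → immaculateKostka α β = 0) :=
  immaculateKostka_unitriangular_general α β hαpos
end

section
/- For any composition α of k into at most n positive parts and a uniquely determined diagonal: the number of fillings counted by K^{atom}_{α,α} equals 1, i.e., the unique augmented tableau of shape D(α) and content α satisfying the Demazure atom filling conditions has all entries i in row i. -/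
/-!
Since rows weakly decrease from the augmented entry `i + 1`, every entry of row `i` is at
most `i + 1`. By strong induction on `i`: each row `w < i` is filled with `w + 1`, which
already uses up all `α_w` copies of `w + 1` allowed by the content, so row `i` contains no
entry below `i + 1`. Conversely, the filling with constant rows satisfies the triple
conditions because `i < j` gives `i + 1 < j + 1`.
-/

/-- `T` is an augmented filling of the diagram of the composition `α` counted in the
definition of Demazure atoms: row `i` (`0`-indexed) has an augmented box in column `0`
filled with `i + 1` followed by `α_i` boxes in columns `1, …, α_i`; entries are zero
outside the augmented diagram and positive inside; column entries are distinct; entries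
weakly decrease along rows; and the triple (inversion) conditions hold. -/
def IsAtomFilling (α : List ℕ) (T : ℕ → ℕ → ℕ) : Prop :=
  (∀ i : ℕ, i < α.length → T i 0 = i + 1) ∧
  (∀ i j : ℕ, (α.length ≤ i ∨ α.getD i 0 < j) → T i j = 0) ∧
  (∀ i j : ℕ, i < α.length → j ≤ α.getD i 0 → 0 < T i j) ∧
  (∀ j i1 i2 : ℕ, i1 < i2 → i2 < α.length →
    j ≤ α.getD i1 0 → j ≤ α.getD i2 0 → T i1 j ≠ T i2 j) ∧
  (∀ i j : ℕ, i < α.length → j + 1 ≤ α.getD i 0 → T i (j + 1) ≤ T i j) ∧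
  (∀ i j k : ℕ, i < j → j < α.length → 1 ≤ k →
    ((α.getD j 0 ≤ α.getD i 0 → k ≤ α.getD i 0 → k ≤ α.getD j 0 →
      ((T i (k - 1) < T j k ∧ T j k < T i k) ∨
       (T i k ≤ T i (k - 1) ∧ T i (k - 1) < T j k) ∨
       (T j k < T i k ∧ T i k ≤ T i (k - 1)))) ∧
     (α.getD i 0 < α.getD j 0 → k ≤ α.getD j 0 → k - 1 ≤ α.getD i 0 →
      ((T j (k - 1) < T i (k - 1) ∧ T i (k - 1) < T j k) ∨
       (T j k ≤ T j (k - 1) ∧ T j (k - 1) < T i (k - 1)) ∨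
       (T i (k - 1) < T j k ∧ T j k ≤ T j (k - 1))))))

/-- `T` has content `β` on the non-augmented boxes: the entry `v + 1` appears exactly
`β_v` times among the boxes in columns `1, …, α_i`. -/
def AtomContent (α β : List ℕ) (T : ℕ → ℕ → ℕ) : Prop :=
  ∀ v : ℕ, v < β.length →
    (∑ i ∈ Finset.range α.length,
      ((Finset.Icc 1 (α.getD i 0)).filter (fun j => T i j = v + 1)).card) = β.getD v 0

def diagonalFilling (α : List ℕ) (i j : ℕ) : ℕ :=
  if i < α.length ∧ j ≤ α.getD i 0 then i + 1 else 0

lemma diagonalFilling_of_mem {α : List ℕ} {i j : ℕ} (hi : i < α.length)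
    (hj : j ≤ α.getD i 0) : diagonalFilling α i j = i + 1 :=
  if_pos ⟨hi, hj⟩

lemma diagonalFilling_isAtomFilling (α : List ℕ) : IsAtomFilling α (diagonalFilling α) := by
  refine ⟨fun i hi => diagonalFilling_of_mem hi (Nat.zero_le _), ?_, ?_, ?_, ?_, ?_⟩
  · intro i j h
    exact if_neg (by omega)
  · intro i j hi hj
    rw [diagonalFilling_of_mem hi hj]
    omega
  · intro j i₁ i₂ h₁₂ h₂ hj₁ hj₂
    rw [diagonalFilling_of_mem (h₁₂.trans h₂) hj₁, diagonalFilling_of_mem h₂ hj₂]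
    omega
  · intro i j hi hj
    rw [diagonalFilling_of_mem hi hj, diagonalFilling_of_mem hi (by omega)]
  · intro i j k hij hj _
    have hi := hij.trans hj
    refine ⟨fun _ hki hkj => ?_, fun _ hkj hki => ?_⟩
    · rw [diagonalFilling_of_mem hi (by omega), diagonalFilling_of_mem hj hkj,
        diagonalFilling_of_mem hi hki]
      omega
    · rw [diagonalFilling_of_mem hj (by omega), diagonalFilling_of_mem hi hki,
        diagonalFilling_of_mem hj hkj]
      omega

lemma atomContent_diagonalFilling (α : List ℕ) : AtomContent α α (diagonalFilling α) := by
  intro v hv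
  rw [Finset.sum_eq_single_of_mem v (Finset.mem_range.mpr hv)]
  · rw [Finset.filter_true_of_mem fun j hj => diagonalFilling_of_mem hv (Finset.mem_Icc.mp hj).2,
      Nat.card_Icc, Nat.add_sub_cancel]
  · intro i hi hiv
    rw [Finset.card_eq_zero, Finset.filter_eq_empty_iff]
    intro j hj
    rw [diagonalFilling_of_mem (Finset.mem_range.mp hi) (Finset.mem_Icc.mp hj).2]
    omega

/-- Row `v` already contains all `α_v` copies of `v + 1` allowed by the content. -/
lemma AtomContent.apply_ne_succ_of_row_eq {α : List ℕ} {T : ℕ → ℕ → ℕ}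
    (hC : AtomContent α α T) {v : ℕ} (hv : v < α.length)
    (hrow : ∀ j ≤ α.getD v 0, T v j = v + 1) {i j : ℕ} (hi : i < α.length) (hiv : i ≠ v)
    (hj₁ : 1 ≤ j) (hj : j ≤ α.getD i 0) : T i j ≠ v + 1 := by
  intro hT
  let count : ℕ → ℕ := fun r => ((Finset.Icc 1 (α.getD r 0)).filter (T r · = v + 1)).card
  have hC_v : ∑ r ∈ Finset.range α.length, count r = α.getD v 0 := hC v hv
  have hcount_v : count v = α.getD v 0 := by
    change (Finset.filter _ _).card = _
    rw [Finset.filter_true_of_mem fun j hj => hrow j (Finset.mem_Icc.mp hj).2, Nat.card_Icc,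
      Nat.add_sub_cancel]
  have hcount_i : 0 < count i :=
    Finset.card_pos.mpr ⟨j, Finset.mem_filter.mpr ⟨Finset.mem_Icc.mpr ⟨hj₁, hj⟩, hT⟩⟩
  have hpair : count v + count i ≤ ∑ r ∈ Finset.range α.length, count r := by
    rw [← Finset.sum_pair hiv.symm]
    refine Finset.sum_le_sum_of_subset (Finset.insert_subset_iff.mpr ⟨?_, ?_⟩)
    · exact Finset.mem_range.mpr hv
    · exact Finset.singleton_subset_iff.mpr (Finset.mem_range.mpr hi)
  omega

namespace IsAtomFilling

variable {α : List ℕ} {T : ℕ → ℕ → ℕ}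

lemma apply_le_succ (hF : IsAtomFilling α T) {i j : ℕ} (hi : i < α.length)
    (hj : j ≤ α.getD i 0) : T i j ≤ i + 1 := by
  induction j with
  | zero => exact (hF.1 i hi).le
  | succ j ih => exact (hF.2.2.2.2.1 i j hi hj).trans (ih (by omega))

lemma apply_eq_succ (hF : IsAtomFilling α T) (hC : AtomContent α α T) {i : ℕ}
    (hi : i < α.length) : ∀ j ≤ α.getD i 0, T i j = i + 1 := by
  induction i using Nat.strong_induction_on with
  | _ i ih =>
  intro j hj
  obtain rfl | hj₁ := Nat.eq_zero_or_pos j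
  · exact hF.1 i hi
  by_contra hne
  have hpos := hF.2.2.1 i j hi hj
  have hle := hF.apply_le_succ hi hj
  obtain ⟨w, hw⟩ : ∃ w, T i j = w + 1 := ⟨T i j - 1, by omega⟩
  have hwi : w < i := by omega
  exact hC.apply_ne_succ_of_row_eq (hwi.trans hi) (ih w hwi (hwi.trans hi)) hi hwi.ne' hj₁ hj hw

lemma eq_diagonalFilling (hF : IsAtomFilling α T) (hC : AtomContent α α T) :
    T = diagonalFilling α := by
  funext i j
  by_cases hij : i < α.length ∧ j ≤ α.getD i 0
  · rw [hF.apply_eq_succ hC hij.1 j hij.2, diagonalFilling_of_mem hij.1 hij.2]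
  · rw [hF.2.1 i j (by omega), diagonalFilling, if_neg hij]

end IsAtomFilling

theorem atomKostka_diagonal_general (α : List ℕ) :
    Nat.card {T : ℕ → ℕ → ℕ // IsAtomFilling α T ∧ AtomContent α α T} = 1 ∧
    (∀ T : ℕ → ℕ → ℕ, IsAtomFilling α T → AtomContent α α T →
      ∀ i j : ℕ, i < α.length → j ≤ α.getD i 0 → T i j = i + 1) := by
  refine ⟨Nat.card_eq_one_iff_exists.mpr ⟨⟨diagonalFilling α, ?_⟩, ?_⟩, ?_⟩
  · exact ⟨diagonalFilling_isAtomFilling α, atomContent_diagonalFilling α⟩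
  · rintro ⟨T, hF, hC⟩
    exact Subtype.ext (hF.eq_diagonalFilling hC)
  · intro T hF hC i j hi hj
    exact hF.apply_eq_succ hC hi j hj

/-- The diagonal Demazure-atom Kostka number is `1`: for a composition `α` of `k` into at
most `n` positive parts, there is exactly one augmented filling of shape `D(α)` and
content `α` satisfying the Demazure atom conditions, namely the filling whose row `i`
consists entirely of the entry `i` (`i + 1` in `0`-indexed form). -/
theorem atomKostka_diagonal (n k : ℕ) (α : List ℕ)
    (hpos : ∀ x ∈ α, 0 < x) (hlen : α.length ≤ n) (hsum : α.sum = k) :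
    Nat.card {T : ℕ → ℕ → ℕ // IsAtomFilling α T ∧ AtomContent α α T} = 1 ∧
    (∀ T : ℕ → ℕ → ℕ, IsAtomFilling α T → AtomContent α α T →
      ∀ i j : ℕ, i < α.length → j ≤ α.getD i 0 → T i j = i + 1) :=
  atomKostka_diagonal_general α
end
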